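/- Let x₁, x₂, τ₁, τ₂ ∈ ℝ with τ₁ > τ₂, and fix reals c₁, c₂, c₃, c₄ with c₁, c₃ > 0 > c₂, c₄ and c₂ + τ₁ > c₃ + τ₂. Let Γ_j = c_j + iℝ (j = 1,2,3,4) be the corresponding vertical lines, oriented with increasing imaginary part, and set S₁(z) = z³/3 − x₁·z, S₂(z) = z³/3 − x₂·z. For N₁, N₂ ∈ ℤ_{≥0} define K(N₁,N₂) = ((−1)^{N₁+N₂}/(N₁!·N₂!)) · ∫_{Γ₁^{N₁}}∫_{Γ₂^{N₁}}∫_{Γ₃^{N₂}}∫_{Γ₄^{N₂}} det D̂ · ∏_{i=1}^{N₁} exp(S₁(z_i) − S₁(w_i))/(z_i − w_i) · ∏_{i=1}^{N₂} exp(S₂(ẑ_i) − S₂(ŵ_i))/(ẑ_i − ŵ_i) ∏ dŵ_i/(2πi) ∏ dẑ_i/(2πi) ∏ dw_i/(2πi) ∏ dz_i/(2πi), where z_i ∈ Γ₁, w_i ∈ Γ₂ (i = 1,…,N₁), ẑ_i ∈ Γ₃, ŵ_i ∈ Γ₄ (i = 1,…,N₂), and D̂ is the (N₁+N₂)×(N₁+N₂)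 block matrix with blocks D̂₁₁ = [1/(z_i − w_j)], D̂₁₂ = [1/(z_i − ŵ_j + τ₁ − τ₂)], D̂₂₁ = [1/(ẑ_i − w_j − τ₁ + τ₂)], D̂₂₂ = [1/(ẑ_i − ŵ_j)]; for N₁ = N₂ = 0 set K(0,0) = 1. Then the integrand is absolutely integrable (so K(N₁,N₂) is well defined), and there exists a constant C > 0, depending on x₁, x₂, τ₁, τ₂ and c₁, c₂, c₃, c₄, such that for all N₁, N₂ ≥ 0, |K(N₁,N₂)| ≤ C^{N₁+N₂}·(N₁+N₂)^{−(N₁+N₂)/2}, with the convention 0⁰ = 1. -/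

import Mathlib

/-!
On a vertical line `Re z = c` one has `Re S(c + is) = c³/3 - xc - cs²`, so every factor
`exp (S(zᵢ) - S(wᵢ)) / (zᵢ - wᵢ)` is dominated by a product of two Gaussians (`c₁, c₃ > 0` and
`c₂, c₄ < 0`). The entries of the block Cauchy matrix `D̂` are bounded by `δ⁻¹`, where `δ` is the
smallest horizontal distance between the lines involved, so Hadamard's inequality gives
`|det D̂| ≤ n^{n/2} δ⁻ⁿ` with `n = N₁ + N₂`. The dominating function is a product of
one-dimensional Gaussians, so it is integrable and `|K(N₁,N₂)| ≤ n^{n/2} qⁿ / (N₁! N₂!)` for a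
constant `q`.
Finally `n^n ≤ eⁿ n! ≤ (2e)ⁿ N₁! N₂!` turns `n^{n/2} / (N₁! N₂!)` into `(2e)ⁿ n^{-n/2}`.
-/

noncomputable def cubicS (x : ℝ) (ζ : ℂ) : ℂ := ζ ^ 3 / 3 - (x : ℂ) * ζ

/-- The integrand of `K(N₁,N₂)`, with each vertical line `Γ_j = c_j + iℝ` parametrized by a real
variable (so that `dz/(2πi) = ds/(2π)` for each variable). -/
noncomputable def airyIntegrand (x₁ x₂ τ₁ τ₂ c₁ c₂ c₃ c₄ : ℝ) (N₁ N₂ : ℕ)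
    (p : (Fin N₁ → ℝ) × (Fin N₁ → ℝ) × (Fin N₂ → ℝ) × (Fin N₂ → ℝ)) : ℂ :=
  let z : Fin N₁ → ℂ := fun i => (c₁ : ℂ) + Complex.I * (p.1 i : ℂ)
  let w : Fin N₁ → ℂ := fun i => (c₂ : ℂ) + Complex.I * (p.2.1 i : ℂ)
  let zh : Fin N₂ → ℂ := fun i => (c₃ : ℂ) + Complex.I * (p.2.2.1 i : ℂ)
  let wh : Fin N₂ → ℂ := fun i => (c₄ : ℂ) + Complex.I * (p.2.2.2 i : ℂ)
  Matrix.det (Matrix.fromBlocks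
      (Matrix.of fun i j => (z i - w j)⁻¹)
      (Matrix.of fun i j => (z i - wh j + (τ₁ : ℂ) - (τ₂ : ℂ))⁻¹)
      (Matrix.of fun i j => (zh i - w j - (τ₁ : ℂ) + (τ₂ : ℂ))⁻¹)
      (Matrix.of fun i j => (zh i - wh j)⁻¹)) *
    (∏ i : Fin N₁, Complex.exp (cubicS x₁ (z i) - cubicS x₁ (w i)) / (z i - w i)) *
    (∏ i : Fin N₂, Complex.exp (cubicS x₂ (zh i) - cubicS x₂ (wh i)) / (zh i - wh i))

noncomputable def airyK (x₁ x₂ τ₁ τ₂ c₁ c₂ c₃ c₄ : ℝ) (N₁ N₂ : ℕ) : ℂ :=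
  (-1 : ℂ) ^ (N₁ + N₂) / ((N₁.factorial : ℂ) * (N₂.factorial : ℂ)) *
    ((2 * (Real.pi : ℂ))⁻¹) ^ (2 * N₁ + 2 * N₂) *
    ∫ p, airyIntegrand x₁ x₂ τ₁ τ₂ c₁ c₂ c₃ c₄ N₁ N₂ p

open Complex MeasureTheory Finset Nat
open scoped ComplexOrder

theorem Real.prod_le_arith_mean_pow {ι : Type*} [Fintype ι] (z : ι → ℝ) (hz : ∀ i, 0 ≤ z i) :
    ∏ i, z i ≤ ((∑ i, z i) / Fintype.card ι) ^ Fintype.card ι := by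
  rcases isEmpty_or_nonempty ι with hι | hι
  · simp
  have hn : Fintype.card ι ≠ 0 := Fintype.card_ne_zero
  have amgm := Real.geom_mean_le_arith_mean univ (fun _ => 1) z (fun _ _ => zero_le_one)
    (by simp [Fintype.card_pos]) (fun i _ => hz i)
  simp only [Real.rpow_one, sum_const, nsmul_eq_mul, mul_one, one_mul] at amgm
  rw [← Real.rpow_inv_natCast_pow (prod_nonneg fun i _ => hz i) hn]
  exact pow_le_pow_left₀ (Real.rpow_nonneg (prod_nonneg fun i _ => hz i) _) amgm _

/-- Hadamard-type bound, from AM-GM for the eigenvalues of `Aᴴ * A`, whose trace is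
`∑ i j, ‖A i j‖ ^ 2`. -/
theorem Matrix.sq_norm_det_le_of_norm_le {𝕜 ι : Type*} [RCLike 𝕜] [Fintype ι] [DecidableEq ι]
    (A : Matrix ι ι 𝕜) {M : ℝ} (hA : ∀ i j, ‖A i j‖ ≤ M) :
    ‖A.det‖ ^ 2 ≤ (Fintype.card ι : ℝ) ^ Fintype.card ι * M ^ (2 * Fintype.card ι) := by
  set n := Fintype.card ι
  have hB := Matrix.posSemidef_conjTranspose_mul_self A
  set ev := hB.1.eigenvalues
  have hdet : ‖A.det‖ ^ 2 = ∏ i, ev i := by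
    have h : ((‖A.det‖ ^ 2 : ℝ) : 𝕜) = ((∏ i, ev i : ℝ) : 𝕜) := by
      rw [RCLike.ofReal_prod, ← hB.1.det_eq_prod_eigenvalues, Matrix.det_mul,
        Matrix.det_conjTranspose, RCLike.star_def, RCLike.conj_mul]
      push_cast; rfl
    exact_mod_cast h
  have htrace : ∑ i, ev i = ∑ i, ∑ j, ‖A j i‖ ^ 2 := by
    have h := hB.1.trace_eq_sum_eigenvalues
    rw [← RCLike.ofReal_sum] at h
    refine RCLike.ofReal_injective (K := 𝕜) (h.symm.trans ?_)
    simp [Matrix.trace, Matrix.mul_apply, RCLike.conj_mul]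
  have hsum : ∑ i, ev i ≤ n * (n * M ^ 2) := by
    rw [htrace]
    calc ∑ i, ∑ j, ‖A j i‖ ^ 2 ≤ ∑ _i : ι, ∑ _j : ι, M ^ 2 := by
          gcongr with i _ j _
          exact hA j i
      _ = n * (n * M ^ 2) := by simp [n]
  calc ‖A.det‖ ^ 2 = ∏ i, ev i := hdet
    _ ≤ ((∑ i, ev i) / n) ^ n := Real.prod_le_arith_mean_pow _ hB.eigenvalues_nonneg
    _ ≤ (n * M ^ 2) ^ n := by
        gcongr
        · exact div_nonneg (sum_nonneg fun i _ => hB.eigenvalues_nonneg i) n.cast_nonneg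
        · exact div_le_of_le_mul₀ n.cast_nonneg (by positivity) (hsum.trans_eq (by ring))
    _ = (n : ℝ) ^ n * M ^ (2 * n) := by rw [mul_pow, pow_mul]

theorem Matrix.norm_det_le_of_norm_le {𝕜 ι : Type*} [RCLike 𝕜] [Fintype ι] [DecidableEq ι]
    (A : Matrix ι ι 𝕜) {M : ℝ} (hM : 0 ≤ M) (hA : ∀ i j, ‖A i j‖ ≤ M) :
    ‖A.det‖ ≤ √((Fintype.card ι : ℝ) ^ Fintype.card ι) * M ^ Fintype.card ι := by
  rw [← Real.sqrt_sq (pow_nonneg hM _), ← Real.sqrt_mul (by positivity), ← pow_mul, mul_comm _ 2]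
  exact Real.le_sqrt_of_sq_le (A.sq_norm_det_le_of_norm_le hA)

theorem Measurable.matrix_det {α ι : Type*} [MeasurableSpace α] [Fintype ι] [DecidableEq ι]
    {A : α → Matrix ι ι ℂ} (hA : ∀ i j, Measurable fun a => A a i j) :
    Measurable fun a => (A a).det := by
  simp only [Matrix.det_apply]
  exact Finset.measurable_sum _ fun σ _ =>
    (Finset.measurable_prod _ fun i _ => hA _ _).const_smul _

theorem Real.pow_self_le_exp_one_pow_mul_factorial (n : ℕ) :
    (n : ℝ) ^ n ≤ Real.exp 1 ^ n * n ! := by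
  have h := Real.pow_div_factorial_le_exp (n : ℝ) n.cast_nonneg n
  rwa [div_le_iff₀ (by positivity), ← Real.exp_one_pow] at h

theorem Nat.add_factorial_le_two_pow_mul (N₁ N₂ : ℕ) :
    (N₁ + N₂)! ≤ 2 ^ (N₁ + N₂) * (N₁ ! * N₂ !) := by
  rw [← Nat.add_choose_mul_factorial_mul_factorial, mul_assoc]
  exact Nat.mul_le_mul_right _ (Nat.choose_le_two_pow _ _)

theorem Real.natCast_rpow_neg_self_div_two (n : ℕ) :
    (n : ℝ) ^ (-(n : ℝ) / 2) = (√((n : ℝ) ^ n))⁻¹ := by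
  rw [Real.sqrt_eq_rpow, ← Real.rpow_natCast, ← Real.rpow_mul n.cast_nonneg, neg_div,
    Real.rpow_neg n.cast_nonneg, mul_one_div]

theorem sqrt_pow_self_div_factorial_mul_le (N₁ N₂ : ℕ) :
    √(((N₁ + N₂ : ℕ) : ℝ) ^ (N₁ + N₂)) / (N₁ ! * N₂ ! : ℝ) ≤
      (2 * Real.exp 1) ^ (N₁ + N₂) * ((N₁ + N₂ : ℕ) : ℝ) ^ (-((N₁ + N₂ : ℕ) : ℝ) / 2) := by
  set n := N₁ + N₂
  have hroot : 0 < √((n : ℝ) ^ n) := Real.sqrt_pos.2 (mod_cast Nat.pow_self_pos)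
  have hfact : (0 : ℝ) < N₁ ! * N₂ ! := by positivity
  rw [Real.natCast_rpow_neg_self_div_two, ← div_eq_mul_inv, div_le_div_iff₀ hfact hroot,
    Real.mul_self_sqrt (by positivity)]
  calc (n : ℝ) ^ n ≤ Real.exp 1 ^ n * n ! := Real.pow_self_le_exp_one_pow_mul_factorial n
    _ ≤ Real.exp 1 ^ n * (2 ^ n * (N₁ ! * N₂ !)) := by
        gcongr; exact_mod_cast Nat.add_factorial_le_two_pow_mul N₁ N₂
    _ = (2 * Real.exp 1) ^ n * (N₁ ! * N₂ ! : ℝ) := by ring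

theorem re_cubicS_vertical (x c s : ℝ) :
    (cubicS x (c + I * s)).re = c ^ 3 / 3 - x * c - c * s ^ 2 := by
  simp [cubicS, pow_succ]
  ring

noncomputable def cubicGain (x a b : ℝ) : ℝ :=
  Real.exp (a ^ 3 / 3 - x * a - (b ^ 3 / 3 - x * b)) / (a - b)

theorem norm_exp_cubicS_sub_div_le (x : ℝ) {a b : ℝ} (hba : b < a) (s t : ℝ) :
    ‖exp (cubicS x (a + I * s) - cubicS x (b + I * t)) / ((a + I * s) - (b + I * t))‖ ≤
      cubicGain x a b * (Real.exp (-a * s ^ 2) * Real.exp (b * t ^ 2)) := by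
  have hgap : a - b ≤ ‖(a + I * s) - (b + I * t)‖ := by
    simpa using Complex.re_le_norm ((a + I * s) - (b + I * t))
  rw [norm_div, Complex.norm_exp, sub_re, re_cubicS_vertical, re_cubicS_vertical]
  calc Real.exp (a ^ 3 / 3 - x * a - a * s ^ 2 - (b ^ 3 / 3 - x * b - b * t ^ 2)) /
        ‖(a + I * s) - (b + I * t)‖
      ≤ Real.exp (a ^ 3 / 3 - x * a - a * s ^ 2 - (b ^ 3 / 3 - x * b - b * t ^ 2)) / (a - b) :=
        div_le_div_of_nonneg_left (Real.exp_nonneg _) (sub_pos.2 hba) hgap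
    _ = _ := by
        rw [cubicGain, ← Real.exp_add, div_mul_eq_mul_div, ← Real.exp_add]
        ring_nf

theorem norm_prod_exp_cubicS_sub_div_le {ι : Type*} [Fintype ι] (x : ℝ) {a b : ℝ} (hba : b < a)
    (s t : ι → ℝ) :
    ‖∏ i, exp (cubicS x (a + I * s i) - cubicS x (b + I * t i)) /
        ((a + I * s i) - (b + I * t i))‖ ≤
      cubicGain x a b ^ Fintype.card ι *
        ((∏ i, Real.exp (-a * s i ^ 2)) * ∏ i, Real.exp (b * t i ^ 2)) := by
  rw [norm_prod, ← Finset.card_univ, ← Finset.prod_const, ← Finset.prod_mul_distrib,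
    ← Finset.prod_mul_distrib]
  exact Finset.prod_le_prod (fun i _ => norm_nonneg _)
    fun i _ => norm_exp_cubicS_sub_div_le x hba (s i) (t i)

theorem Complex.norm_inv_le_of_le_abs_re {u : ℂ} {δ : ℝ} (hδ : 0 < δ) (h : δ ≤ |u.re|) :
    ‖u⁻¹‖ ≤ δ⁻¹ := by
  rw [norm_inv]
  exact inv_anti₀ hδ (h.trans (abs_re_le_norm u))

theorem norm_det_airyMatrix_le {τ₁ τ₂ c₁ c₂ c₃ c₄ δ : ℝ} (hδ : 0 < δ)
    (h₁₁ : δ ≤ c₁ - c₂) (h₂₁ : δ ≤ c₂ + τ₁ - (c₃ + τ₂))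
    (h₂₂ : δ ≤ c₃ - c₄) {N₁ N₂ : ℕ} (s t : Fin N₁ → ℝ) (u v : Fin N₂ → ℝ) :
    ‖(Matrix.fromBlocks
      (Matrix.of fun i j => ((c₁ + I * s i) - (c₂ + I * t j))⁻¹)
      (Matrix.of fun i j => ((c₁ + I * s i) - (c₄ + I * v j) + τ₁ - τ₂)⁻¹)
      (Matrix.of fun i j => ((c₃ + I * u i) - (c₂ + I * t j) - τ₁ + τ₂)⁻¹)
      (Matrix.of fun i j => ((c₃ + I * u i) - (c₄ + I * v j))⁻¹)).det‖ ≤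
      √(((N₁ + N₂ : ℕ) : ℝ) ^ (N₁ + N₂)) * δ⁻¹ ^ (N₁ + N₂) := by
  refine (Matrix.norm_det_le_of_norm_le _ (inv_nonneg.2 hδ.le) ?_).trans_eq (by simp)
  -- The gap `c₁ - c₄ + (τ₁ - τ₂)` of the upper right block is the sum of the other three.
  rintro (i | i) (j | j) <;>
    simp only [Matrix.fromBlocks_apply₁₁, Matrix.fromBlocks_apply₁₂, Matrix.fromBlocks_apply₂₁,
      Matrix.fromBlocks_apply₂₂, Matrix.of_apply] <;>
    refine Complex.norm_inv_le_of_le_abs_re hδ (le_abs.2 ?_) <;> simp <;>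
    first | (left; linarith) | (right; linarith)

noncomputable def fourBlockProduct (f₁ f₂ f₃ f₄ : ℝ → ℝ) (N₁ N₂ : ℕ)
    (p : (Fin N₁ → ℝ) × (Fin N₁ → ℝ) × (Fin N₂ → ℝ) × (Fin N₂ → ℝ)) : ℝ :=
  (∏ i, f₁ (p.1 i)) * ((∏ i, f₂ (p.2.1 i)) * ((∏ i, f₃ (p.2.2.1 i)) * ∏ i, f₄ (p.2.2.2 i)))

theorem integrable_fourBlockProduct {f₁ f₂ f₃ f₄ : ℝ → ℝ} (h₁ : Integrable f₁)
    (h₂ : Integrable f₂) (h₃ : Integrable f₃) (h₄ : Integrable f₄) (N₁ N₂ : ℕ) :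
    Integrable (fourBlockProduct f₁ f₂ f₃ f₄ N₁ N₂) := by
  have hpi {f : ℝ → ℝ} (hf : Integrable f) (N : ℕ) :
      Integrable fun v : Fin N → ℝ => ∏ i, f (v i) :=
    Integrable.fintype_prod fun _ => hf
  rw [Measure.volume_eq_prod, Measure.volume_eq_prod, Measure.volume_eq_prod]
  exact (hpi h₁ N₁).mul_prod ((hpi h₂ N₁).mul_prod ((hpi h₃ N₂).mul_prod (hpi h₄ N₂)))

theorem integral_fourBlockProduct (f₁ f₂ f₃ f₄ : ℝ → ℝ) (N₁ N₂ : ℕ) :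
    ∫ p, fourBlockProduct f₁ f₂ f₃ f₄ N₁ N₂ p =
      (∫ s, f₁ s) ^ N₁ * ((∫ s, f₂ s) ^ N₁ * ((∫ s, f₃ s) ^ N₂ * (∫ s, f₄ s) ^ N₂)) := by
  have hpi (f : ℝ → ℝ) (N : ℕ) : ∫ v : Fin N → ℝ, ∏ i, f (v i) = (∫ s, f s) ^ N := by
    rw [volume_pi, integral_fintype_prod_eq_pow, Fintype.card_fin]
  rw [Measure.volume_eq_prod, Measure.volume_eq_prod, Measure.volume_eq_prod]
  simp only [fourBlockProduct]
  rw [integral_prod_mul (fun v : Fin N₁ → ℝ => ∏ i, f₁ (v i))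
      fun q : (Fin N₁ → ℝ) × (Fin N₂ → ℝ) × (Fin N₂ → ℝ) =>
        (∏ i, f₂ (q.1 i)) * ((∏ i, f₃ (q.2.1 i)) * ∏ i, f₄ (q.2.2 i)),
    integral_prod_mul (fun v : Fin N₁ → ℝ => ∏ i, f₂ (v i))
      fun q : (Fin N₂ → ℝ) × (Fin N₂ → ℝ) => (∏ i, f₃ (q.1 i)) * ∏ i, f₄ (q.2 i),
    integral_prod_mul (fun v : Fin N₂ → ℝ => ∏ i, f₃ (v i)) fun v : Fin N₂ → ℝ => ∏ i, f₄ (v i),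
    hpi, hpi, hpi, hpi]

noncomputable def airyMajorant (x₁ x₂ c₁ c₂ c₃ c₄ δ : ℝ) (N₁ N₂ : ℕ)
    (p : (Fin N₁ → ℝ) × (Fin N₁ → ℝ) × (Fin N₂ → ℝ) × (Fin N₂ → ℝ)) : ℝ :=
  √(((N₁ + N₂ : ℕ) : ℝ) ^ (N₁ + N₂)) * δ⁻¹ ^ (N₁ + N₂) *
    cubicGain x₁ c₁ c₂ ^ N₁ * cubicGain x₂ c₃ c₄ ^ N₂ *
    fourBlockProduct (fun s => Real.exp (-c₁ * s ^ 2)) (fun t => Real.exp (c₂ * t ^ 2))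
      (fun s => Real.exp (-c₃ * s ^ 2)) (fun t => Real.exp (c₄ * t ^ 2)) N₁ N₂ p

theorem integrable_airyMajorant (x₁ x₂ : ℝ) {c₁ c₂ c₃ c₄ : ℝ} (hc₁ : 0 < c₁) (hc₂ : c₂ < 0)
    (hc₃ : 0 < c₃) (hc₄ : c₄ < 0) (δ : ℝ) (N₁ N₂ : ℕ) :
    Integrable (airyMajorant x₁ x₂ c₁ c₂ c₃ c₄ δ N₁ N₂) := by
  have hgauss {b : ℝ} (hb : 0 < b) : Integrable fun s : ℝ => Real.exp (-b * s ^ 2) :=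
    integrable_exp_neg_mul_sq hb
  exact (integrable_fourBlockProduct (hgauss hc₁) (by simpa using hgauss (neg_pos.2 hc₂))
    (hgauss hc₃) (by simpa using hgauss (neg_pos.2 hc₄)) N₁ N₂).const_mul _

theorem norm_airyIntegrand_le (x₁ x₂ : ℝ) {τ₁ τ₂ c₁ c₂ c₃ c₄ δ : ℝ} (hδ : 0 < δ)
    (h₁₁ : δ ≤ c₁ - c₂) (h₂₁ : δ ≤ c₂ + τ₁ - (c₃ + τ₂)) (h₂₂ : δ ≤ c₃ - c₄) (N₁ N₂ : ℕ)
    (p : (Fin N₁ → ℝ) × (Fin N₁ → ℝ) × (Fin N₂ → ℝ) × (Fin N₂ → ℝ)) :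
    ‖airyIntegrand x₁ x₂ τ₁ τ₂ c₁ c₂ c₃ c₄ N₁ N₂ p‖ ≤
      airyMajorant x₁ x₂ c₁ c₂ c₃ c₄ δ N₁ N₂ p := by
  simp only [airyIntegrand]
  rw [norm_mul, norm_mul]
  have hD := norm_det_airyMatrix_le hδ h₁₁ h₂₁ h₂₂ p.1 p.2.1 p.2.2.1 p.2.2.2
  have hP₁ := norm_prod_exp_cubicS_sub_div_le x₁ (by linarith : c₂ < c₁) p.1 p.2.1
  have hP₂ := norm_prod_exp_cubicS_sub_div_le x₂ (by linarith : c₄ < c₃) p.2.2.1 p.2.2.2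
  refine (mul_le_mul (mul_le_mul hD hP₁ (norm_nonneg _) ((norm_nonneg _).trans hD)) hP₂
    (norm_nonneg _) (mul_nonneg ((norm_nonneg _).trans hD) ((norm_nonneg _).trans hP₁))).trans_eq ?_
  simp only [airyMajorant, fourBlockProduct, Fintype.card_fin]
  ring

theorem measurable_airyIntegrand (x₁ x₂ τ₁ τ₂ c₁ c₂ c₃ c₄ : ℝ) (N₁ N₂ : ℕ) :
    Measurable (airyIntegrand x₁ x₂ τ₁ τ₂ c₁ c₂ c₃ c₄ N₁ N₂) := by
  unfold airyIntegrand cubicS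
  refine .mul (.mul (Measurable.matrix_det fun i j => ?_) (by fun_prop)) (by fun_prop)
  rcases i with i | i <;> rcases j with j | j <;> simp only [Matrix.fromBlocks_apply₁₁,
    Matrix.fromBlocks_apply₁₂, Matrix.fromBlocks_apply₂₁, Matrix.fromBlocks_apply₂₂,
    Matrix.of_apply] <;> fun_prop

theorem norm_airyK (x₁ x₂ τ₁ τ₂ c₁ c₂ c₃ c₄ : ℝ) (N₁ N₂ : ℕ) :
    ‖airyK x₁ x₂ τ₁ τ₂ c₁ c₂ c₃ c₄ N₁ N₂‖ =
      ((2 * Real.pi)⁻¹ ^ 2) ^ (N₁ + N₂) / (N₁ ! * N₂ !) *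
        ‖∫ p, airyIntegrand x₁ x₂ τ₁ τ₂ c₁ c₂ c₃ c₄ N₁ N₂ p‖ := by
  rw [← pow_mul, mul_add]
  simp only [airyK, norm_mul, norm_div, norm_pow, norm_inv, norm_neg, norm_one, one_pow,
    Complex.norm_natCast, Complex.norm_ofNat, Complex.norm_real, Real.norm_eq_abs,
    abs_of_pos Real.pi_pos]
  ring

noncomputable def airyRate (x a b δ : ℝ) : ℝ :=
  (2 * Real.pi)⁻¹ ^ 2 * δ⁻¹ * cubicGain x a b *
    (∫ s, Real.exp (-a * s ^ 2)) * ∫ t, Real.exp (b * t ^ 2)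

theorem airyRate_nonneg (x : ℝ) {a b δ : ℝ} (hδ : 0 < δ) (hba : b < a) : 0 ≤ airyRate x a b δ := by
  have hgain : 0 ≤ cubicGain x a b := div_nonneg (Real.exp_nonneg _) (sub_nonneg.2 hba.le)
  unfold airyRate
  positivity

theorem integrable_airyIntegrand (x₁ x₂ : ℝ) {τ₁ τ₂ c₁ c₂ c₃ c₄ δ : ℝ} (hc₁ : 0 < c₁)
    (hc₂ : c₂ < 0) (hc₃ : 0 < c₃) (hc₄ : c₄ < 0) (hδ : 0 < δ) (h₁₁ : δ ≤ c₁ - c₂)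
    (h₂₁ : δ ≤ c₂ + τ₁ - (c₃ + τ₂)) (h₂₂ : δ ≤ c₃ - c₄) (N₁ N₂ : ℕ) :
    Integrable (airyIntegrand x₁ x₂ τ₁ τ₂ c₁ c₂ c₃ c₄ N₁ N₂) :=
  (integrable_airyMajorant x₁ x₂ hc₁ hc₂ hc₃ hc₄ δ N₁ N₂).mono'
    (measurable_airyIntegrand ..).aestronglyMeasurable
    (ae_of_all _ (norm_airyIntegrand_le x₁ x₂ hδ h₁₁ h₂₁ h₂₂ N₁ N₂))

theorem norm_airyK_le (x₁ x₂ : ℝ) {τ₁ τ₂ c₁ c₂ c₃ c₄ δ : ℝ} (hc₁ : 0 < c₁)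
    (hc₂ : c₂ < 0) (hc₃ : 0 < c₃) (hc₄ : c₄ < 0) (hδ : 0 < δ) (h₁₁ : δ ≤ c₁ - c₂)
    (h₂₁ : δ ≤ c₂ + τ₁ - (c₃ + τ₂)) (h₂₂ : δ ≤ c₃ - c₄) (N₁ N₂ : ℕ) :
    ‖airyK x₁ x₂ τ₁ τ₂ c₁ c₂ c₃ c₄ N₁ N₂‖ ≤
      √(((N₁ + N₂ : ℕ) : ℝ) ^ (N₁ + N₂)) / (N₁ ! * N₂ !) *
        (airyRate x₁ c₁ c₂ δ ^ N₁ * airyRate x₂ c₃ c₄ δ ^ N₂) :=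
  calc ‖airyK x₁ x₂ τ₁ τ₂ c₁ c₂ c₃ c₄ N₁ N₂‖
      ≤ ((2 * Real.pi)⁻¹ ^ 2) ^ (N₁ + N₂) / (N₁ ! * N₂ !) *
          ∫ p, airyMajorant x₁ x₂ c₁ c₂ c₃ c₄ δ N₁ N₂ p := by
        rw [norm_airyK]
        gcongr
        exact norm_integral_le_of_norm_le (integrable_airyMajorant x₁ x₂ hc₁ hc₂ hc₃ hc₄ δ N₁ N₂)
          (ae_of_all _ (norm_airyIntegrand_le x₁ x₂ hδ h₁₁ h₂₁ h₂₂ N₁ N₂))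
    _ = _ := by
        simp only [airyMajorant, airyRate]
        rw [integral_const_mul, integral_fourBlockProduct]
        ring

theorem stmt19_general (x₁ x₂ τ₁ τ₂ : ℝ) (c₁ c₂ c₃ c₄ : ℝ)
    (hc₁ : 0 < c₁) (hc₃ : 0 < c₃) (hc₂ : c₂ < 0) (hc₄ : c₄ < 0) (hc : c₃ + τ₂ < c₂ + τ₁) :
    (∀ N₁ N₂ : ℕ, MeasureTheory.Integrable (airyIntegrand x₁ x₂ τ₁ τ₂ c₁ c₂ c₃ c₄ N₁ N₂)) ∧
    ∃ C > 0, ∀ N₁ N₂ : ℕ,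
      ‖airyK x₁ x₂ τ₁ τ₂ c₁ c₂ c₃ c₄ N₁ N₂‖ ≤
        C ^ (N₁ + N₂) * ((N₁ + N₂ : ℕ) : ℝ) ^ (-(((N₁ + N₂ : ℕ) : ℝ)) / 2) := by
  set δ := min (c₁ - c₂) (min (c₂ + τ₁ - (c₃ + τ₂)) (c₃ - c₄))
  have hδ : 0 < δ := lt_min (by linarith) (lt_min (by linarith) (by linarith))
  have h₁₁ : δ ≤ c₁ - c₂ := min_le_left _ _
  have h₂₁ : δ ≤ c₂ + τ₁ - (c₃ + τ₂) := (min_le_right _ _).trans (min_le_left _ _)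
  have h₂₂ : δ ≤ c₃ - c₄ := (min_le_right _ _).trans (min_le_right _ _)
  have hq₁ := airyRate_nonneg x₁ hδ (by linarith : c₂ < c₁)
  have hq₂ := airyRate_nonneg x₂ hδ (by linarith : c₄ < c₃)
  set q := max 1 (max (airyRate x₁ c₁ c₂ δ) (airyRate x₂ c₃ c₄ δ))
  refine ⟨integrable_airyIntegrand x₁ x₂ hc₁ hc₂ hc₃ hc₄ hδ h₁₁ h₂₁ h₂₂,
    2 * Real.exp 1 * q, by positivity, fun N₁ N₂ => ?_⟩
  calc ‖airyK x₁ x₂ τ₁ τ₂ c₁ c₂ c₃ c₄ N₁ N₂‖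
      ≤ √(((N₁ + N₂ : ℕ) : ℝ) ^ (N₁ + N₂)) / (N₁ ! * N₂ !) *
          (airyRate x₁ c₁ c₂ δ ^ N₁ * airyRate x₂ c₃ c₄ δ ^ N₂) :=
        norm_airyK_le x₁ x₂ hc₁ hc₂ hc₃ hc₄ hδ h₁₁ h₂₁ h₂₂ N₁ N₂
    _ ≤ (2 * Real.exp 1) ^ (N₁ + N₂) * ((N₁ + N₂ : ℕ) : ℝ) ^ (-((N₁ + N₂ : ℕ) : ℝ) / 2) *
          (q ^ N₁ * q ^ N₂) := by
        gcongr
        · exact sqrt_pow_self_div_factorial_mul_le N₁ N₂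
        · exact le_max_of_le_right (le_max_left _ _)
        · exact le_max_of_le_right (le_max_right _ _)
    _ = _ := by ring

theorem stmt19 (x₁ x₂ τ₁ τ₂ : ℝ) (hτ : τ₂ < τ₁) (c₁ c₂ c₃ c₄ : ℝ)
    (hc₁ : 0 < c₁) (hc₃ : 0 < c₃) (hc₂ : c₂ < 0) (hc₄ : c₄ < 0) (hc : c₃ + τ₂ < c₂ + τ₁) :
    (∀ N₁ N₂ : ℕ, MeasureTheory.Integrable (airyIntegrand x₁ x₂ τ₁ τ₂ c₁ c₂ c₃ c₄ N₁ N₂)) ∧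
    ∃ C > 0, ∀ N₁ N₂ : ℕ,
      ‖airyK x₁ x₂ τ₁ τ₂ c₁ c₂ c₃ c₄ N₁ N₂‖ ≤
        C ^ (N₁ + N₂) * ((N₁ + N₂ : ℕ) : ℝ) ^ (-(((N₁ + N₂ : ℕ) : ℝ)) / 2) :=
  stmt19_general x₁ x₂ τ₁ τ₂ c₁ c₂ c₃ c₄ hc₁ hc₃ hc₂ hc₄ hc
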